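/- Let G = C(n; a_1,b_1; a_2,b_2) be a 2-paired circulant that is connected and whose complement is connected. Then G is a CIS graph if and only if gcd(a_1·b_1, a_2·b_2) = 1. -/

import Mathlib

open SimpleGraph Finset

/-- The circulant graph `C_n(D)` on vertex set `ZMod n` with distance set
`D ⊆ {1, …, n-1}`: distinct vertices `i, j` are adjacent iff `(i - j) mod n ∈ D`. -/
def circulant (n : ℕ) (D : Finset ℕ) : SimpleGraph (ZMod n) :=
  SimpleGraph.fromRel (fun i j => (i - j).val ∈ D)

/-- A graph is a CIS graph if every maximal clique and every maximal stable set
(equivalently, every maximal clique of the complement) intersect. -/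
def SimpleGraph.IsCIS {V : Type*} (G : SimpleGraph V) : Prop :=
  ∀ C S : Set V, Maximal G.IsClique C → Maximal Gᶜ.IsClique S → (C ∩ S).Nonempty

/-- The distance set `{d ∈ {1,…,n-1} : a ∣ d ∧ a*b ∤ d}` of a pair `(a, b)`. -/
def pairedD (n a b : ℕ) : Finset ℕ :=
  (Finset.Icc 1 (n - 1)).filter (fun d => a ∣ d ∧ ¬ (a * b) ∣ d)

/-- The `k`-paired circulant `C(n; a_1,b_1; …; a_k,b_k)` (index type `ι`). -/
def pairedCirculant (n : ℕ) {ι : Type*} [Fintype ι] (a b : ι → ℕ) : SimpleGraph (ZMod n) :=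
  circulant n (Finset.univ.biUnion (fun i => pairedD n (a i) (b i)))

/-- The lexicographic product of two simple graphs. -/
def lexProd {α β : Type*} (G : SimpleGraph α) (H : SimpleGraph β) : SimpleGraph (α × β) where
  Adj p q := G.Adj p.1 q.1 ∨ (p.1 = q.1 ∧ H.Adj p.2 q.2)
  symm := by
    constructor
    intro p q h
    rcases h with h | ⟨h1, h2⟩
    · exact Or.inl h.symm
    · exact Or.inr ⟨h1.symm, h2.symm⟩
  loopless := by
    constructor
    intro p h
    rcases h with h | ⟨_, h⟩
    · exact G.irrefl h
    · exact H.irrefl h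

/-!
Write `mᵢ = aᵢbᵢ`: two vertices are adjacent iff, for some `i`, they agree modulo `aᵢ` but not
modulo `mᵢ`.

If `gcd(m₁, m₂) = 1`, the residues modulo `m₁` and modulo `m₂` can be prescribed independently.
Every clique is constant modulo `a₁` or modulo `a₂`, say `a₁`. A maximal stable set `S` meets
every class modulo `a₁`, inside a single class modulo `m₁`, and likewise for `a₂` and `m₂`. The
maximal clique then contains a vertex whose residue modulo `m₁` is the one `S` takes in the
clique's class modulo `a₁`, and whose residue modulo `m₂` is the one `S` takes in the vertex's own
class modulo `a₂`; no vertex of `S` is adjacent to it, so it lies in `S`.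

If `g = gcd(m₁, m₂) ≠ 1`, connectivity of the graph and of its complement forces `aᵢ, bᵢ ≠ 1` and
`gcd(a₁, a₂) = 1`. We find a clique `K` and a stable set `S` such that `S` dominates every clique
containing `K`; extending both to maximal ones gives a disjoint pair. Up to swapping the indices,
either `a₂ ∤ m₁` and `g ∤ a₂`, where `K = {0, a₁}` and `S = {m₁, a₂}` work, or `a₁ < a₂` and
`a₂ ∣ m₁`, where `K = {0, a₂}` works together with one vertex in each class modulo `a₁`, the
residues modulo `a₂` of these vertices being distinct and nonzero.
-/

namespace SimpleGraph

variable {V : Type*} {G : SimpleGraph V}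

lemma IsClique.exists_maximal_superset {s : Set V} (hs : G.IsClique s) :
    ∃ t, s ⊆ t ∧ Maximal G.IsClique t :=
  zorn_subset_nonempty {t | G.IsClique t}
    (fun _ hc hchain _ ↦ ⟨_, (isClique_sUnion hchain.directedOn).2 hc,
      fun _ ↦ Set.subset_sUnion_of_mem⟩) s hs

lemma mem_of_maximal_isClique {C : Set V} {u : V} (hC : Maximal G.IsClique C)
    (h : ∀ w ∈ C, u ≠ w → G.Adj u w) : u ∈ C :=
  hC.mem_of_prop_insert (hC.1.insert h)

lemma mem_of_maximal_isClique_compl {S : Set V} {u : V} (hS : Maximal Gᶜ.IsClique S)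
    (h : ∀ w ∈ S, ¬ G.Adj u w) : u ∈ S :=
  mem_of_maximal_isClique hS fun w hw huw ↦ ⟨huw, h w hw⟩

lemma nonempty_of_maximal_isClique [Nonempty V] {C : Set V} (hC : Maximal G.IsClique C) :
    C.Nonempty := by
  rcases C.eq_empty_or_nonempty with rfl | hne
  · exact ⟨_, mem_of_maximal_isClique (u := Classical.arbitrary V) hC (by simp)⟩
  · exact hne

lemma Reachable.apply_eq_of_forall_adj {β : Type*} {f : V → β}
    (hf : ∀ v w, G.Adj v w → f v = f w) {u v : V} (h : G.Reachable u v) : f u = f v := by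
  rw [reachable_iff_reflTransGen] at h
  induction h with
  | refl => rfl
  | tail _ hadj ih => exact ih.trans (hf _ _ hadj)

lemma not_isCIS_of_dominating {K S : Set V} (hK : G.IsClique K) (hS : Gᶜ.IsClique S)
    (hdom : ∀ C, K ⊆ C → G.IsClique C → ∀ v ∈ C, ∃ s ∈ S, G.Adj s v) : ¬ G.IsCIS := by
  intro hcis
  obtain ⟨C, hKC, hC⟩ := hK.exists_maximal_superset
  obtain ⟨T, hST, hT⟩ := hS.exists_maximal_superset
  obtain ⟨v, hvC, hvT⟩ := hcis C T hC hT
  obtain ⟨s, hsS, hsv⟩ := hdom C hKC hC.1 v hvC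
  exact (hT.1 (hST hsS) hvT hsv.ne).2 hsv

end SimpleGraph

section TwoPaired

variable {V X₁ X₂ A₁ A₂ : Type*}

/-- An abstract form of `C(n; a₁,b₁; a₂,b₂)` with `gcd(a₁b₁, a₂b₂) = 1`: the block `ρᵢ v` and the
cell `πᵢ v` stand for the residues of `v` modulo `aᵢ` and modulo `aᵢbᵢ`, and `exists_eq_eq` is the
Chinese remainder theorem. -/
structure IsTwoPaired (G : SimpleGraph V) (π₁ : V → X₁) (ρ₁ : V → A₁) (π₂ : V → X₂)
    (ρ₂ : V → A₂) : Prop where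
  adj_iff : ∀ v w, G.Adj v w ↔ (ρ₁ v = ρ₁ w ∧ π₁ v ≠ π₁ w) ∨ (ρ₂ v = ρ₂ w ∧ π₂ v ≠ π₂ w)
  refines₁ : ∀ v w, π₁ v = π₁ w → ρ₁ v = ρ₁ w
  refines₂ : ∀ v w, π₂ v = π₂ w → ρ₂ v = ρ₂ w
  exists_eq_eq : ∀ v w, ∃ u, π₁ u = π₁ v ∧ π₂ u = π₂ w

namespace IsTwoPaired

variable {G : SimpleGraph V} {π₁ : V → X₁} {ρ₁ : V → A₁} {π₂ : V → X₂} {ρ₂ : V → A₂}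
  {C S : Set V}

protected lemma symm (h : IsTwoPaired G π₁ ρ₁ π₂ ρ₂) : IsTwoPaired G π₂ ρ₂ π₁ ρ₁ :=
  ⟨fun v w ↦ (h.adj_iff v w).trans or_comm, h.refines₂, h.refines₁,
    fun v w ↦ (h.exists_eq_eq w v).imp fun _ ↦ And.symm⟩

lemma block₁_eq_of_block₂_ne (h : IsTwoPaired G π₁ ρ₁ π₂ ρ₂) (hC : G.IsClique C) {v w : V}
    (hv : v ∈ C) (hw : w ∈ C) (hne : ρ₂ v ≠ ρ₂ w) : ρ₁ v = ρ₁ w := by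
  rcases (h.adj_iff v w).1 (hC hv hw fun hvw ↦ hne (hvw ▸ rfl)) with ⟨he, -⟩ | ⟨he, -⟩
  · exact he
  · exact absurd he hne

lemma block₂_eq_of_cell₁_eq (h : IsTwoPaired G π₁ ρ₁ π₂ ρ₂) (hC : G.IsClique C) {v w : V}
    (hv : v ∈ C) (hw : w ∈ C) (heq : π₁ v = π₁ w) : ρ₂ v = ρ₂ w := by
  rcases eq_or_ne v w with rfl | hvw
  · rfl
  rcases (h.adj_iff v w).1 (hC hv hw hvw) with ⟨-, hne⟩ | ⟨he, -⟩
  · exact absurd heq hne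
  · exact he

lemma block_const_of_isClique (h : IsTwoPaired G π₁ ρ₁ π₂ ρ₂) (hC : G.IsClique C) :
    (∀ v ∈ C, ∀ w ∈ C, ρ₁ v = ρ₁ w) ∨ (∀ v ∈ C, ∀ w ∈ C, ρ₂ v = ρ₂ w) := by
  by_contra! ⟨⟨p, hp, q, hq, hpq⟩, ⟨r, hr, s, hs, hrs⟩⟩
  have hρ₂ : ρ₂ p = ρ₂ q := by
    by_contra hne
    exact hpq (h.block₁_eq_of_block₂_ne hC hp hq hne)
  obtain ⟨t, ht, htp⟩ : ∃ t ∈ C, ρ₂ t ≠ ρ₂ p := by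
    by_cases hrp : ρ₂ r = ρ₂ p
    · exact ⟨s, hs, fun hsp ↦ hrs (hrp.trans hsp.symm)⟩
    · exact ⟨r, hr, hrp⟩
  exact hpq ((h.block₁_eq_of_block₂_ne hC ht hp htp).symm.trans
    (h.block₁_eq_of_block₂_ne hC ht hq (hρ₂ ▸ htp)))

lemma cell₁_eq_of_block₁_eq (h : IsTwoPaired G π₁ ρ₁ π₂ ρ₂) (hS : Gᶜ.IsClique S) {v w : V}
    (hv : v ∈ S) (hw : w ∈ S) (heq : ρ₁ v = ρ₁ w) : π₁ v = π₁ w := by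
  by_contra hne
  exact (hS hv hw (ne_of_apply_ne π₁ hne)).2 ((h.adj_iff v w).2 (Or.inl ⟨heq, hne⟩))

lemma exists_mem_block₁_eq (h : IsTwoPaired G π₁ ρ₁ π₂ ρ₂) (hS : Maximal Gᶜ.IsClique S) (v : V) :
    ∃ w ∈ S, ρ₁ w = ρ₁ v := by
  have : Nonempty V := ⟨v⟩
  by_contra! hno
  obtain ⟨w, hw⟩ := nonempty_of_maximal_isClique hS
  obtain ⟨u, hu₁, hu₂⟩ := h.exists_eq_eq v w
  have hu : ρ₁ u = ρ₁ v := h.refines₁ _ _ hu₁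
  refine hno u (mem_of_maximal_isClique_compl hS fun z hz hadj ↦ ?_) hu
  rcases (h.adj_iff u z).1 hadj with ⟨he, -⟩ | ⟨he, hne⟩
  · exact hno z hz (he.symm.trans hu)
  · exact hne (hu₂.trans
      (h.symm.cell₁_eq_of_block₁_eq hS.1 hw hz ((h.refines₂ _ _ hu₂).symm.trans he)))

variable {r : A₁}

lemma exists_mem_cell₁_eq (h : IsTwoPaired G π₁ ρ₁ π₂ ρ₂) (hC : Maximal G.IsClique C)
    (hρ : ∀ v ∈ C, ρ₁ v = r) {x : V} (hx : ρ₁ x = r) : ∃ v ∈ C, π₁ v = π₁ x := by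
  by_contra! hno
  refine hno x (mem_of_maximal_isClique hC fun w hw _ ↦ ?_) rfl
  exact (h.adj_iff x w).2 (Or.inl ⟨hx.trans (hρ w hw).symm, (hno w hw).symm⟩)

lemma exists_mem_cell₁_eq_cell₂_eq (h : IsTwoPaired G π₁ ρ₁ π₂ ρ₂) (hC : Maximal G.IsClique C)
    (hρ : ∀ v ∈ C, ρ₁ v = r) {v y : V} (hv : v ∈ C) (hy : ρ₂ y = ρ₂ v) :
    ∃ u ∈ C, π₁ u = π₁ v ∧ π₂ u = π₂ y := by
  obtain ⟨u, hu₁, hu₂⟩ := h.exists_eq_eq v y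
  by_contra! hno
  refine hno u (mem_of_maximal_isClique hC fun w hw _ ↦ ?_) hu₁ hu₂
  by_cases hw₁ : π₁ w = π₁ v
  · have hρ₂ : ρ₂ u = ρ₂ w :=
      (h.refines₂ _ _ hu₂).trans (hy.trans (h.block₂_eq_of_cell₁_eq hC.1 hw hv hw₁).symm)
    exact (h.adj_iff u w).2 (Or.inr ⟨hρ₂, hu₂.trans_ne (hno w hw hw₁).symm⟩)
  · have hρ₁ : ρ₁ u = ρ₁ w := (h.refines₁ _ _ hu₁).trans ((hρ v hv).trans (hρ w hw).symm)
    exact (h.adj_iff u w).2 (Or.inl ⟨hρ₁, hu₁.trans_ne (Ne.symm hw₁)⟩)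

lemma inter_nonempty_of_block₁_const (h : IsTwoPaired G π₁ ρ₁ π₂ ρ₂) (hC : Maximal G.IsClique C)
    (hS : Maximal Gᶜ.IsClique S) (hρ : ∀ v ∈ C, ρ₁ v = r) {v₀ : V} (hv₀ : v₀ ∈ C) :
    (C ∩ S).Nonempty := by
  obtain ⟨w₁, hw₁S, hw₁⟩ := h.exists_mem_block₁_eq hS v₀
  obtain ⟨v, hvC, hv⟩ := h.exists_mem_cell₁_eq hC hρ (hw₁.trans (hρ v₀ hv₀))
  obtain ⟨w₂, hw₂S, hw₂⟩ := h.symm.exists_mem_block₁_eq hS v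
  obtain ⟨u, huC, hu₁, hu₂⟩ := h.exists_mem_cell₁_eq_cell₂_eq hC hρ hvC hw₂
  refine ⟨u, huC, mem_of_maximal_isClique_compl hS fun z hz hadj ↦ ?_⟩
  rcases (h.adj_iff u z).1 hadj with ⟨he, hne⟩ | ⟨he, hne⟩
  · have hρ₁ : ρ₁ w₁ = ρ₁ z := (hw₁.trans (hρ v₀ hv₀)).trans ((hρ u huC).symm.trans he)
    exact hne (hu₁.trans (hv.trans (h.cell₁_eq_of_block₁_eq hS.1 hw₁S hz hρ₁)))
  · have hρ₂ : ρ₂ w₂ = ρ₂ z := (h.refines₂ _ _ hu₂).symm.trans he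
    exact hne (hu₂.trans (h.symm.cell₁_eq_of_block₁_eq hS.1 hw₂S hz hρ₂))

lemma isCIS (h : IsTwoPaired G π₁ ρ₁ π₂ ρ₂) [Nonempty V] : G.IsCIS := by
  intro C S hC hS
  obtain ⟨v₀, hv₀⟩ := nonempty_of_maximal_isClique hC
  rcases h.block_const_of_isClique hC.1 with hρ | hρ
  · exact h.inter_nonempty_of_block₁_const hC hS (fun v hv ↦ hρ v hv v₀ hv₀) hv₀
  · exact h.symm.inter_nonempty_of_block₁_const hC hS (fun v hv ↦ hρ v hv v₀ hv₀) hv₀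

end IsTwoPaired

end TwoPaired

section PairedGraph

variable {R : Type*} [CommRing R] {a₁ m₁ a₂ m₂ : R}

lemma IsCoprime.exists_dvd_sub_and_dvd_sub {a b : R} (h : IsCoprime a b) (x y : R) :
    ∃ v, a ∣ v - x ∧ b ∣ v - y := by
  obtain ⟨u, t, hut⟩ := h
  exact ⟨x * (t * b) + y * (u * a), ⟨(y - x) * u, by linear_combination x * hut⟩,
    ⟨(x - y) * t, by linear_combination y * hut⟩⟩

lemma Ideal.Quotient.mk_span_singleton_eq_iff {a v w : R} :
    Ideal.Quotient.mk (Ideal.span {a}) v = Ideal.Quotient.mk (Ideal.span {a}) w ↔ a ∣ v - w := by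
  rw [Ideal.Quotient.eq, Ideal.mem_span_singleton]

def pairedGraph (a₁ m₁ a₂ m₂ : R) : SimpleGraph R where
  Adj v w := (a₁ ∣ v - w ∧ ¬ m₁ ∣ v - w) ∨ (a₂ ∣ v - w ∧ ¬ m₂ ∣ v - w)
  symm := ⟨fun v w ↦ by simp only [dvd_sub_comm (b := v), imp_self]⟩
  loopless := ⟨fun v ↦ by simp⟩

lemma pairedGraph_adj {v w : R} : (pairedGraph a₁ m₁ a₂ m₂).Adj v w ↔
    (a₁ ∣ v - w ∧ ¬ m₁ ∣ v - w) ∨ (a₂ ∣ v - w ∧ ¬ m₂ ∣ v - w) :=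
  Iff.rfl

lemma pairedGraph_comm : pairedGraph a₁ m₁ a₂ m₂ = pairedGraph a₂ m₂ a₁ m₁ := by
  ext
  exact or_comm

theorem pairedGraph_isCIS (h₁ : a₁ ∣ m₁) (h₂ : a₂ ∣ m₂) (h : IsCoprime m₁ m₂) :
    (pairedGraph a₁ m₁ a₂ m₂).IsCIS := by
  let mk (a : R) := Ideal.Quotient.mk (Ideal.span {a})
  have hmk (a v w : R) : mk a v = mk a w ↔ a ∣ v - w := Ideal.Quotient.mk_span_singleton_eq_iff
  refine IsTwoPaired.isCIS (π₁ := mk m₁) (ρ₁ := mk a₁) (π₂ := mk m₂) (ρ₂ := mk a₂)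
    ⟨fun v w ↦ ?_, fun v w ↦ ?_, fun v w ↦ ?_, fun v w ↦ ?_⟩
  · simp only [hmk, ne_eq, pairedGraph_adj]
  · simpa only [hmk] using h₁.trans
  · simpa only [hmk] using h₂.trans
  · simpa only [hmk] using h.exists_dvd_sub_and_dvd_sub v w

lemma dvd_of_mem_of_isClique {C : Set R} (hC : (pairedGraph a₁ m₁ a₂ m₂).IsClique C)
    (h₀ : 0 ∈ C) (ha₁ : a₁ ∈ C) (ha₂a₁ : ¬ a₂ ∣ a₁) {v : R} (hv : v ∈ C) : a₁ ∣ v := by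
  by_contra hav
  have hv₀ : v ≠ 0 := by rintro rfl; exact hav (dvd_zero _)
  have hva₁ : v ≠ a₁ := by rintro rfl; exact hav dvd_rfl
  have hv₀' : a₂ ∣ v - 0 := by
    rcases hC hv h₀ hv₀ with ⟨h, -⟩ | ⟨h, -⟩
    · exact absurd (by simpa using h) hav
    · exact h
  have hva₁' : a₂ ∣ v - a₁ := by
    rcases hC hv ha₁ hva₁ with ⟨h, -⟩ | ⟨h, -⟩
    · exact absurd ((dvd_sub_left dvd_rfl).1 h) hav
    · exact h
  exact ha₂a₁ (by simpa using dvd_sub hv₀' hva₁')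

theorem pairedGraph_not_isCIS_of_not_dvd {g : R} (ha₁ : a₁ ∣ m₁) (hg₁ : g ∣ m₁) (hg₂ : g ∣ m₂)
    (hga₂ : ¬ g ∣ a₂) (hm₁a₁ : ¬ m₁ ∣ a₁) (ha₂a₁ : ¬ a₂ ∣ a₁) (ha₁a₂ : ¬ a₁ ∣ a₂)
    (ha₂m₁ : ¬ a₂ ∣ m₁) : ¬ (pairedGraph a₁ m₁ a₂ m₂).IsCIS := by
  refine not_isCIS_of_dominating (K := {0, a₁}) (S := {m₁, a₂})
    (isClique_pair.2 fun _ ↦ Or.inl ⟨by simp, by simpa using hm₁a₁⟩)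
    (isClique_pair.2 fun hne ↦ ⟨hne, ?_⟩) fun C hKC hC v hv ↦ ?_
  · rintro (⟨h, -⟩ | ⟨h, -⟩)
    · exact ha₁a₂ ((dvd_sub_right ha₁).1 h)
    · exact ha₂m₁ ((dvd_sub_left dvd_rfl).1 h)
  have h₀ : (0 : R) ∈ C := hKC (by simp)
  have hav : a₁ ∣ v := dvd_of_mem_of_isClique hC h₀ (hKC (by simp)) ha₂a₁ hv
  by_cases hm : m₁ ∣ v
  · have ha₂v : a₂ ∣ v := by
      rcases eq_or_ne v 0 with rfl | hv₀
      · exact dvd_zero _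
      rcases hC hv h₀ hv₀ with ⟨-, h⟩ | ⟨h, -⟩
      · exact absurd (by simpa using hm) h
      · simpa using h
    refine ⟨a₂, by simp, Or.inr ⟨dvd_sub dvd_rfl ha₂v, fun hm₂ ↦ hga₂ ?_⟩⟩
    exact (dvd_sub_left (hg₁.trans hm)).1 (hg₂.trans hm₂)
  · exact ⟨m₁, by simp, Or.inl ⟨dvd_sub ha₁ hav, fun h ↦ hm ((dvd_sub_right dvd_rfl).1 h)⟩⟩

end PairedGraph

namespace ZMod

variable {n d : ℕ}

lemma castHom_eq_zero_of_natCast_dvd (hd : d ∣ n) {z : ZMod n} (h : (d : ZMod n) ∣ z) :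
    castHom hd (ZMod d) z = 0 := by
  obtain ⟨c, rfl⟩ := h
  rw [map_mul, map_natCast, natCast_self, zero_mul]

lemma natCast_dvd_natCast_iff (hd : d ∣ n) {k : ℕ} : (d : ZMod n) ∣ (k : ZMod n) ↔ d ∣ k :=
  ⟨fun h ↦ (natCast_eq_zero_iff k d).1 (by simpa using castHom_eq_zero_of_natCast_dvd hd h),
    fun h ↦ Nat.cast_dvd_cast h⟩

lemma natCast_dvd_iff_dvd_val [NeZero n] (hd : d ∣ n) (z : ZMod n) :
    (d : ZMod n) ∣ z ↔ d ∣ z.val := by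
  rw [← natCast_dvd_natCast_iff hd, natCast_zmod_val]

lemma eq_of_natCast_dvd_sub (hd : d ∣ n) {r s : ℕ} (hr : r < d) (hs : s < d)
    (h : (d : ZMod n) ∣ (r : ZMod n) - s) : r = s := by
  have := castHom_eq_zero_of_natCast_dvd hd h
  rw [map_sub, map_natCast, map_natCast, sub_eq_zero, natCast_eq_natCast_iff'] at this
  rwa [Nat.mod_eq_of_lt hr, Nat.mod_eq_of_lt hs] at this

lemma exists_lt_natCast_dvd_sub [NeZero n] (hd : d ≠ 0) (v : ZMod n) :
    ∃ r < d, (d : ZMod n) ∣ v - r := by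
  refine ⟨v.val % d, Nat.mod_lt _ (Nat.pos_of_ne_zero hd), v.val / d, ?_⟩
  rw [sub_eq_iff_eq_add]
  nth_rewrite 1 [← v.natCast_zmod_val, ← Nat.div_add_mod v.val d]
  push_cast
  rfl

end ZMod

section Circulant

variable {n : ℕ}

lemma val_sub_mem_pairedD_iff [NeZero n] {a b : ℕ} (h : a * b ∣ n) (v w : ZMod n) :
    (v - w).val ∈ pairedD n a b ↔ (a : ZMod n) ∣ v - w ∧ ¬ ((a * b : ℕ) : ZMod n) ∣ v - w := by
  rw [ZMod.natCast_dvd_iff_dvd_val (dvd_of_mul_right_dvd h), ZMod.natCast_dvd_iff_dvd_val h,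
    pairedD, Finset.mem_filter, and_iff_right_iff_imp, Finset.mem_Icc]
  rintro ⟨-, hab⟩
  have hpos : (v - w).val ≠ 0 := fun h₀ ↦ hab (h₀ ▸ dvd_zero _)
  have := (v - w).val_lt
  omega

theorem circulant_pairedD_union_eq [NeZero n] {a₁ b₁ a₂ b₂ : ℕ} (h₁ : a₁ * b₁ ∣ n)
    (h₂ : a₂ * b₂ ∣ n) : circulant n (pairedD n a₁ b₁ ∪ pairedD n a₂ b₂) =
      pairedGraph (a₁ : ZMod n) ((a₁ * b₁ : ℕ) : ZMod n) a₂ ((a₂ * b₂ : ℕ) : ZMod n) := by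
  set G := pairedGraph (a₁ : ZMod n) ((a₁ * b₁ : ℕ) : ZMod n) a₂ ((a₂ * b₂ : ℕ) : ZMod n)
  have key (v w : ZMod n) : (v - w).val ∈ pairedD n a₁ b₁ ∪ pairedD n a₂ b₂ ↔ G.Adj v w := by
    rw [Finset.mem_union, val_sub_mem_pairedD_iff h₁, val_sub_mem_pairedD_iff h₂]
    rfl
  ext v w
  rw [circulant, fromRel_adj, key, key, G.adj_comm w v, or_self]
  exact ⟨And.right, fun h ↦ ⟨h.ne, h⟩⟩

lemma not_connected_of_forall_adj_natCast_dvd {e : ℕ} {H : SimpleGraph (ZMod n)} (he : e ∣ n)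
    (he₁ : e ≠ 1) (h : ∀ v w, H.Adj v w → (e : ZMod n) ∣ v - w) : ¬ H.Connected := fun hc ↦ by
  have : Nontrivial (ZMod e) := ZMod.nontrivial_iff.2 he₁
  have h₀₁ := (hc.preconnected 0 1).apply_eq_of_forall_adj (f := ZMod.castHom he (ZMod e))
    fun v w hvw ↦ sub_eq_zero.1 <| by
      rw [← map_sub]
      exact ZMod.castHom_eq_zero_of_natCast_dvd he (h v w hvw)
  rw [map_zero, map_one] at h₀₁
  exact zero_ne_one h₀₁

lemma coprime_of_connected {a₁ a₂ : ℕ} {m₁ m₂ : ZMod n} (ha₁ : a₁ ∣ n)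
    (hc : (pairedGraph (a₁ : ZMod n) m₁ a₂ m₂).Connected) : a₁.Coprime a₂ := by
  by_contra hne
  refine not_connected_of_forall_adj_natCast_dvd ((Nat.gcd_dvd_left _ _).trans ha₁) hne ?_ hc
  rintro v w (⟨h, -⟩ | ⟨h, -⟩)
  · exact (Nat.cast_dvd_cast (Nat.gcd_dvd_left _ _)).trans h
  · exact (Nat.cast_dvd_cast (Nat.gcd_dvd_right _ _)).trans h

lemma ne_one_of_compl_connected {a b : ℕ} {a₂ m₂ : ZMod n} (h : a * b ∣ n) (hab : a * b ≠ 1)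
    (hc : (pairedGraph (a : ZMod n) ((a * b : ℕ) : ZMod n) a₂ m₂)ᶜ.Connected) : a ≠ 1 := by
  rintro rfl
  refine not_connected_of_forall_adj_natCast_dvd h hab (fun v w hvw ↦ ?_) hc
  by_contra hvw'
  exact hvw.2 (Or.inl ⟨by simp, hvw'⟩)

lemma ne_one_of_connected {a b a₂ : ℕ} {m₂ : ZMod n} (ha₂ : a₂ ∣ n) (ha₂₁ : a₂ ≠ 1)
    (hc : (pairedGraph (a : ZMod n) ((a * b : ℕ) : ZMod n) a₂ m₂).Connected) : b ≠ 1 := by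
  rintro rfl
  refine not_connected_of_forall_adj_natCast_dvd ha₂ ha₂₁ (fun v w hvw ↦ ?_) hc
  rcases hvw with ⟨h, h'⟩ | ⟨h, -⟩
  · rw [mul_one] at h'
    exact absurd h h'
  · exact h

theorem pairedGraph_not_isCIS_of_dvd [NeZero n] {a₁ a₂ : ℕ} {m₁ m₂ : ZMod n} (ha₁ : a₁ ∣ n)
    (ha₂ : a₂ ∣ n) (hcop : a₁.Coprime a₂) (ha₁₁ : a₁ ≠ 1) (hlt : a₁ < a₂)
    (ha₂m₁ : (a₂ : ZMod n) ∣ m₁) (hm₂a₂ : ¬ m₂ ∣ a₂) :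
    ¬ (pairedGraph (a₁ : ZMod n) m₁ a₂ m₂).IsCIS := by
  have ha₁a₂ : ¬ (a₁ : ZMod n) ∣ a₂ :=
    (ZMod.natCast_dvd_natCast_iff ha₁).not.2 fun h ↦ ha₁₁ (hcop.eq_one_of_dvd h)
  choose w hw₁ hw₂ using fun r : ℕ ↦
    (hcop.cast (R := ZMod n)).exists_dvd_sub_and_dvd_sub (r : ZMod n) ((r + 1 : ℕ) : ZMod n)
  refine not_isCIS_of_dominating (K := {0, (a₂ : ZMod n)}) (S := w '' Set.Iio a₁)
    (isClique_pair.2 fun _ ↦ Or.inr ⟨by simp, by simpa using hm₂a₂⟩) ?_ fun C hKC hC v hv ↦ ?_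
  · rintro _ ⟨r, hr : r < a₁, rfl⟩ _ ⟨s, hs : s < a₁, rfl⟩ hne
    refine ⟨hne, ?_⟩
    rintro (⟨h, -⟩ | ⟨h, -⟩)
    · refine hne (congrArg w (ZMod.eq_of_natCast_dvd_sub ha₁ hr hs ?_))
      convert dvd_add (dvd_sub h (hw₁ r)) (hw₁ s) using 1
      ring
    · refine hne (congrArg w (Nat.succ_injective
        (ZMod.eq_of_natCast_dvd_sub ha₂ (by omega : r + 1 < a₂) (by omega : s + 1 < a₂) ?_)))
      convert dvd_add (dvd_sub h (hw₂ r)) (hw₂ s) using 1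
      ring
  have hav : (a₂ : ZMod n) ∣ v := by
    rw [pairedGraph_comm] at hC
    exact dvd_of_mem_of_isClique hC (hKC (by simp)) (hKC (by simp)) ha₁a₂ hv
  obtain ⟨r, hr, hvr⟩ := ZMod.exists_lt_natCast_dvd_sub (ne_zero_of_dvd_ne_zero (NeZero.ne n) ha₁) v
  refine ⟨w r, ⟨r, hr, rfl⟩, Or.inl ⟨?_, fun hm ↦ ?_⟩⟩
  · convert dvd_sub (hw₁ r) hvr using 1
    ring
  · have : (a₂ : ZMod n) ∣ ((r + 1 : ℕ) : ZMod n) - ((0 : ℕ) : ZMod n) := by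
      convert dvd_add (dvd_sub (ha₂m₁.trans hm) (hw₂ r)) hav using 1
      push_cast
      ring
    exact r.succ_ne_zero (ZMod.eq_of_natCast_dvd_sub ha₂ (by omega) (by omega) this)

lemma not_mul_dvd_self_of_ne_one {a b : ℕ} (ha : a ≠ 0) (hb : b ≠ 1) : ¬ a * b ∣ a := fun h ↦
  hb (Nat.dvd_one.1 (Nat.dvd_of_mul_dvd_mul_left (Nat.pos_of_ne_zero ha) (by rwa [mul_one])))

theorem pairedGraph_not_isCIS_of_gcd_ne_one [NeZero n] {a₁ b₁ a₂ b₂ : ℕ} (h₁ : a₁ * b₁ ∣ n)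
    (h₂ : a₂ * b₂ ∣ n) (hcop : a₁.Coprime a₂) (ha₁ : a₁ ≠ 1) (ha₂ : a₂ ≠ 1) (hb₁ : b₁ ≠ 1)
    (hb₂ : b₂ ≠ 1) (hg : (a₁ * b₁).gcd (a₂ * b₂) ≠ 1) :
    ¬ (pairedGraph (a₁ : ZMod n) ((a₁ * b₁ : ℕ) : ZMod n) a₂ ((a₂ * b₂ : ℕ) : ZMod n)).IsCIS := by
  wlog hlt : a₁ < a₂ generalizing a₁ b₁ a₂ b₂
  · have hne : a₁ ≠ a₂ := by
      rintro rfl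
      exact ha₁ ((Nat.coprime_self _).1 hcop)
    rw [pairedGraph_comm]
    exact this h₂ h₁ hcop.symm ha₂ ha₁ hb₂ hb₁ (by rwa [Nat.gcd_comm]) (by omega)
  have hT {d k : ℕ} (hd : d ∣ n) (h : ¬ d ∣ k) : ¬ (d : ZMod n) ∣ (k : ZMod n) :=
    (ZMod.natCast_dvd_natCast_iff hd).not.2 h
  have ha₁a₂ : ¬ a₁ ∣ a₂ := fun h ↦ ha₁ (hcop.eq_one_of_dvd h)
  have ha₂a₁ : ¬ a₂ ∣ a₁ := fun h ↦ ha₂ (hcop.symm.eq_one_of_dvd h)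
  have ha₁n := dvd_of_mul_right_dvd h₁
  have ha₂n := dvd_of_mul_right_dvd h₂
  have hm₁a₁ := not_mul_dvd_self_of_ne_one (ne_zero_of_dvd_ne_zero (NeZero.ne n) ha₁n) hb₁
  have hm₂a₂ := not_mul_dvd_self_of_ne_one (ne_zero_of_dvd_ne_zero (NeZero.ne n) ha₂n) hb₂
  have hgn : (a₁ * b₁).gcd (a₂ * b₂) ∣ n := (Nat.gcd_dvd_left _ _).trans h₁
  by_cases ha₂m₁ : a₂ ∣ a₁ * b₁
  · exact pairedGraph_not_isCIS_of_dvd ha₁n ha₂n hcop ha₁ hlt (Nat.cast_dvd_cast ha₂m₁)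
      (hT h₂ hm₂a₂)
  by_cases hga₂ : (a₁ * b₁).gcd (a₂ * b₂) ∣ a₂
  · rw [pairedGraph_comm]
    refine pairedGraph_not_isCIS_of_not_dvd (Nat.cast_dvd_cast (dvd_mul_right _ _))
      (Nat.cast_dvd_cast (Nat.gcd_dvd_right _ _)) (Nat.cast_dvd_cast (Nat.gcd_dvd_left _ _))
      (hT hgn fun h ↦ hg ((hcop.coprime_dvd_left h).eq_one_of_dvd hga₂)) (hT h₂ hm₂a₂)
      (hT ha₁n ha₁a₂) (hT ha₂n ha₂a₁) (hT ha₁n fun h ↦ ?_)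
    exact ha₁a₂ ((Nat.dvd_gcd (dvd_mul_right _ _) h).trans hga₂)
  · exact pairedGraph_not_isCIS_of_not_dvd (Nat.cast_dvd_cast (dvd_mul_right _ _))
      (Nat.cast_dvd_cast (Nat.gcd_dvd_left _ _)) (Nat.cast_dvd_cast (Nat.gcd_dvd_right _ _))
      (hT hgn hga₂) (hT h₁ hm₁a₁) (hT ha₂n ha₂a₁) (hT ha₁n ha₁a₂) (hT ha₂n ha₂m₁)

end Circulant

theorem stmt_5_general (n a1 b1 a2 b2 : ℕ) (hn : 0 < n)
    (h1 : a1 * b1 ∣ n) (h2 : a2 * b2 ∣ n)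
    (hconn : (circulant n (pairedD n a1 b1 ∪ pairedD n a2 b2)).Connected)
    (hcoconn : (circulant n (pairedD n a1 b1 ∪ pairedD n a2 b2))ᶜ.Connected) :
    (circulant n (pairedD n a1 b1 ∪ pairedD n a2 b2)).IsCIS ↔
      Nat.gcd (a1 * b1) (a2 * b2) = 1 := by
  have : NeZero n := ⟨hn.ne'⟩
  rw [circulant_pairedD_union_eq h1 h2] at hconn hcoconn ⊢
  refine ⟨fun hcis ↦ by_contra fun hg ↦ ?_, fun hg ↦ pairedGraph_isCIS
    (Nat.cast_dvd_cast (dvd_mul_right a1 b1)) (Nat.cast_dvd_cast (dvd_mul_right a2 b2))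
    (Nat.Coprime.cast hg)⟩
  have hcop := coprime_of_connected (dvd_of_mul_right_dvd h1) hconn
  have ha1 := ne_one_of_compl_connected h1 (fun h ↦ hg (by rw [h, Nat.gcd_one_left])) hcoconn
  rw [pairedGraph_comm] at hcoconn
  have ha2 := ne_one_of_compl_connected h2 (fun h ↦ hg (by rw [h, Nat.gcd_one_right])) hcoconn
  have hb1 := ne_one_of_connected (dvd_of_mul_right_dvd h2) ha2 hconn
  rw [pairedGraph_comm] at hconn
  have hb2 := ne_one_of_connected (dvd_of_mul_right_dvd h1) ha1 hconn
  exact pairedGraph_not_isCIS_of_gcd_ne_one h1 h2 hcop ha1 ha2 hb1 hb2 hg hcis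

/-- A connected and co-connected 2-paired circulant `C(n; a₁,b₁; a₂,b₂)` is CIS
iff `gcd(a₁b₁, a₂b₂) = 1`. -/
theorem stmt_5 (n a1 b1 a2 b2 : ℕ) (hn : 0 < n)
    (ha1 : 0 < a1) (hb1 : 0 < b1) (ha2 : 0 < a2) (hb2 : 0 < b2)
    (h1 : a1 * b1 ∣ n) (h2 : a2 * b2 ∣ n)
    (hconn : (circulant n (pairedD n a1 b1 ∪ pairedD n a2 b2)).Connected)
    (hcoconn : (circulant n (pairedD n a1 b1 ∪ pairedD n a2 b2))ᶜ.Connected) :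
    (circulant n (pairedD n a1 b1 ∪ pairedD n a2 b2)).IsCIS ↔
      Nat.gcd (a1 * b1) (a2 * b2) = 1 :=
  stmt_5_general n a1 b1 a2 b2 hn h1 h2 hconn hcoconn
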